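/- Suppose ℓ = k, n ≥ 1 and d ≥ 1 (the overdetermined case). The set of matrices P(∂) in M_{k,k}(d) for which the distributed system ℬ(P) is NOT controllable contains a nonempty Zariski-open subset of M_{k,k}(d); that is, there exists a nonzero polynomial F in N = k²·(n+d choose n) variables such that every k×k matrix of degree at most d whose coefficient vector is not a zero of F defines an uncontrollable system (equivalently, the quotient A^k/P has nonzero torsion). -/

import Mathlib

noncomputable section

/-- The space of smooth (infinitely differentiable) functions `ℝⁿ → ℂ`,
as a `ℂ`-submodule of the space of all functions `ℝⁿ → ℂ`. -/
def Cinf (n : ℕ) : Submodule ℂ ((Fin n → ℝ) → ℂ) where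
  carrier := {f | ContDiff ℝ (⊤ : ℕ∞) f}
  add_mem' := fun {f g} hf hg => by
    simp only [Set.mem_setOf_eq] at *
    exact hf.add hg
  zero_mem' := by
    simp only [Set.mem_setOf_eq]
    exact contDiff_const
  smul_mem' := fun c f hf => by
    simp only [Set.mem_setOf_eq] at *
    exact hf.const_smul c

/-- The distributed system `ℬ(P)` defined by an `ℓ × k` matrix `M` of elements of
`A = ℂ[∂₁, …, ∂ₙ]`: the kernel `{f ∈ (C^∞)^k : M f = 0}` of the operator
`(C^∞)^k → (C^∞)^ℓ` given by `M`, where `A` acts on `C^∞` via a given module structure. -/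
def system {n ℓ k : ℕ} [Module (MvPolynomial (Fin n) ℂ) (Cinf n)]
    (M : Matrix (Fin ℓ) (Fin k) (MvPolynomial (Fin n) ℂ)) : Set (Fin k → Cinf n) :=
  {f | ∀ i : Fin ℓ, ∑ j, M i j • f j = 0}

/-- A behaviour `B ⊆ (C^∞)^k` is controllable if for any two subsets `U₁, U₂` of `ℝⁿ`
whose closures do not intersect, and any `f₁, f₂ ∈ B`, there is an `f ∈ B` agreeing with
`f₁` on a neighbourhood of `U₁` and with `f₂` on a neighbourhood of `U₂`. -/
def IsControllable {n k : ℕ} (B : Set (Fin k → Cinf n)) : Prop :=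
  ∀ U₁ U₂ : Set (Fin n → ℝ), closure U₁ ∩ closure U₂ = ∅ →
    ∀ f₁ ∈ B, ∀ f₂ ∈ B, ∃ f ∈ B, ∃ V₁ V₂ : Set (Fin n → ℝ),
      IsOpen V₁ ∧ IsOpen V₂ ∧ U₁ ⊆ V₁ ∧ U₂ ⊆ V₂ ∧
      (∀ x ∈ V₁, ∀ j, (f j : (Fin n → ℝ) → ℂ) x = (f₁ j : (Fin n → ℝ) → ℂ) x) ∧
      (∀ x ∈ V₂, ∀ j, (f j : (Fin n → ℝ) → ℂ) x = (f₂ j : (Fin n → ℝ) → ℂ) x)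

/-- The coefficient of the monomial `m` (of degree at most `d`) in the `(i, j)` entry of the
matrix `M`: the coordinates of `M ∈ M_{ℓ,k}(d)` under the identification of `M_{ℓ,k}(d)` with
the affine space `ℂ^N`, `N = ℓ·k·(n+d choose n)`. -/
def matrixCoeffs {n ℓ k d : ℕ} (M : Matrix (Fin ℓ) (Fin k) (MvPolynomial (Fin n) ℂ)) :
    Fin ℓ × Fin k × {m : Fin n →₀ ℕ // m.degree ≤ d} → ℂ :=
  fun v => MvPolynomial.coeff v.2.2.1 (M v.1 v.2.1)

/-!
The polynomial `F` is the coefficient of `∂₁ ^ (k * d)` in the determinant of the generic matrix;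
it takes the value `1` at the diagonal matrix `∂₁ ^ d • 1`. If `F` does not vanish at `P`, then
`det P` is not constant, so by the Nullstellensatz it has a zero `ξ ∈ ℂⁿ`, and `v • exp (ξ ⬝ x)`
with `P(ξ) v = 0`, `v ≠ 0`, is a nonzero solution. Multiplying by the adjugate, every solution `f`
satisfies `det P(∂) f = 0`; when `f` has compact support, the Fourier transform turns this into
`det P(2πiξ) f̂(ξ) = 0`, and a nonzero polynomial cannot vanish on an open subset of `ℝⁿ`, so
`f = 0`. Controllability would glue the solution `0`, far away, to the exponential solution near
a point, producing a nonzero compactly supported solution.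
-/

instance Finsupp.fintypeDegreeLE {σ : Type*} [Finite σ] (d : ℕ) :
    Fintype {m : σ →₀ ℕ // m.degree ≤ d} :=
  (Finsupp.finite_of_degree_le d).fintype

namespace MvPolynomial

theorem exists_eval_eq_zero_of_not_isUnit {σ K : Type*} [Finite σ] [Field K] [IsAlgClosed K]
    {p : MvPolynomial σ K} (hp : ¬IsUnit p) : ∃ x : σ → K, eval x p = 0 := by
  by_contra! h
  have hempty : zeroLocus K (Ideal.span {p}) = ∅ :=
    Set.eq_empty_of_forall_notMem fun x hx =>
      h x (by simpa using (mem_zeroLocus_iff.mp hx) p (Ideal.subset_span rfl))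
  have htop : (Ideal.span {p}).radical = ⊤ := by
    rw [← vanishingIdeal_zeroLocus_eq_radical (K := K), hempty, vanishingIdeal_empty]
  exact hp (Ideal.span_singleton_eq_top.mp (Ideal.radical_eq_top.mp htop))

theorem not_isUnit_of_coeff_ne_zero {σ R : Type*} [CommRing R] [IsReduced R]
    {p : MvPolynomial σ R} {m : σ →₀ ℕ} (hm : m ≠ 0) (h : coeff m p ≠ 0) : ¬IsUnit p := by
  rw [isUnit_iff_eq_C_of_isReduced]
  rintro ⟨r, -, rfl⟩
  classical
  exact h (by rw [coeff_C, if_neg hm.symm])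

theorem dense_setOf_eval_const_mul_ne_zero {σ : Type*} [Fintype σ] {p : MvPolynomial σ ℂ}
    (hp : p ≠ 0) {c : ℂ} (hc : c ≠ 0) :
    Dense {x : σ → ℝ | eval (fun i => c * x i) p ≠ 0} := by
  rw [Metric.dense_iff]
  intro y r hr
  by_contra! hball
  refine hp (funext_set (fun i => (fun t : ℝ => c * t) '' Metric.ball (y i) r) (fun i => ?_) ?_)
  · rw [Real.ball_eq_Ioo]
    exact (Set.Ioo_infinite (by linarith)).image
      ((mul_right_injective₀ hc).comp Complex.ofReal_injective).injOn
  · intro z hz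
    choose x hx hxz using fun i => hz i trivial
    have hxball : x ∈ Metric.ball y r := by rw [ball_pi y hr]; exact fun i _ => hx i
    have hzx : z = fun i => c * x i := by funext i; exact (hxz i).symm
    simpa [hzx] using Set.disjoint_left.mp (Set.disjoint_iff_inter_eq_empty.mpr hball) hxball

theorem sum_monomial_coeff_of_totalDegree_le {σ R : Type*} [Finite σ] [CommSemiring R]
    {p : MvPolynomial σ R} {d : ℕ} (hp : p.totalDegree ≤ d) :
    ∑ m : {m : σ →₀ ℕ // m.degree ≤ d}, monomial m.1 (coeff m.1 p) = p := by
  classical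
  set S := (Finsupp.finite_of_degree_le (σ := σ) d).toFinset
  rw [← Finset.sum_subtype S (fun m => by simp [S]) (fun m => monomial m (coeff m p))]
  conv_rhs => rw [p.as_sum]
  refine (Finset.sum_subset (fun m hm => ?_) fun m _ hm => ?_).symm
  · rw [Set.Finite.mem_toFinset]
    exact (le_totalDegree hm).trans hp
  · rw [notMem_support_iff.mp hm, monomial_zero]

end MvPolynomial

open MvPolynomial

theorem Matrix.det_smul_eq_zero_of_sum_smul_eq_zero {ι R V : Type*} [Fintype ι]
    [DecidableEq ι] [CommRing R] [AddCommGroup V] [Module R V] (M : Matrix ι ι R) {f : ι → V}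
    (hf : ∀ i, ∑ j, M i j • f j = 0) (j : ι) : M.det • f j = 0 :=
  calc M.det • f j = ∑ l, (M.adjugate * M) j l • f l := by
        simp [Matrix.adjugate_mul, Matrix.one_apply, ite_smul]
    _ = ∑ i, M.adjugate j i • ∑ l, M i l • f l := by
        simp only [Matrix.mul_apply, Finset.sum_smul, Finset.smul_sum, mul_smul]
        exact Finset.sum_comm
    _ = 0 := by simp [hf]

section GenericMatrix

variable (n ℓ k d : ℕ)

def genericMatrix : Matrix (Fin ℓ) (Fin k)
    (MvPolynomial (Fin n) (MvPolynomial (Fin ℓ × Fin k × {m : Fin n →₀ ℕ // m.degree ≤ d}) ℂ)) :=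
  fun i j => ∑ t, monomial t.1 (X (i, j, t))

def genericDetCoeff (i₀ : Fin n) :
    MvPolynomial (Fin k × Fin k × {m : Fin n →₀ ℕ // m.degree ≤ d}) ℂ :=
  coeff (Finsupp.single i₀ (k * d)) (genericMatrix n k k d).det

variable {n ℓ k d}

theorem map_genericMatrix_matrixCoeffs {M : Matrix (Fin ℓ) (Fin k) (MvPolynomial (Fin n) ℂ)}
    (hM : ∀ i j, (M i j).totalDegree ≤ d) :
    (genericMatrix n ℓ k d).map (map (eval (matrixCoeffs M))) = M := by
  ext1 i j
  simp only [Matrix.map_apply, genericMatrix, map_sum, map_monomial, eval_X]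
  exact sum_monomial_coeff_of_totalDegree_le (hM i j)

theorem eval_genericDetCoeff (i₀ : Fin n)
    {M : Matrix (Fin k) (Fin k) (MvPolynomial (Fin n) ℂ)} (hM : ∀ i j, (M i j).totalDegree ≤ d) :
    eval (matrixCoeffs M) (genericDetCoeff n k d i₀) =
      coeff (Finsupp.single i₀ (k * d)) M.det := by
  rw [genericDetCoeff, ← coeff_map, RingHom.map_det, RingHom.mapMatrix_apply,
    map_genericMatrix_matrixCoeffs hM]

theorem genericDetCoeff_ne_zero (i₀ : Fin n) : genericDetCoeff n k d i₀ ≠ 0 := by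
  classical
  intro h
  set M₀ : Matrix (Fin k) (Fin k) (MvPolynomial (Fin n) ℂ) :=
    Matrix.diagonal fun _ => X i₀ ^ d
  have hM₀ : ∀ i j, (M₀ i j).totalDegree ≤ d := by
    intro i j
    by_cases hij : i = j
    · simp [M₀, hij, totalDegree_X_pow]
    · simp [M₀, hij]
  have := eval_genericDetCoeff i₀ hM₀
  rw [h, map_zero, Matrix.det_diagonal, Finset.prod_const, Finset.card_univ, Fintype.card_fin,
    ← pow_mul, X_pow_eq_monomial, coeff_monomial, mul_comm, if_pos rfl] at this
  exact zero_ne_one this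

end GenericMatrix

section DifferentialOperators

open MeasureTheory FourierTransform

variable {n : ℕ}

def dotCLM (ξ : Fin n → ℂ) : (Fin n → ℝ) →L[ℝ] ℂ :=
  ∑ l, ξ l • (Complex.ofRealCLM.comp (ContinuousLinearMap.proj l))

theorem dotCLM_apply (ξ : Fin n → ℂ) (x : Fin n → ℝ) : dotCLM ξ x = ∑ l, ξ l * x l := by
  simp [dotCLM]

def cinfExp (ξ : Fin n → ℂ) : Cinf n :=
  ⟨fun x => Complex.exp (dotCLM ξ x),
    show ContDiff ℝ (⊤ : ℕ∞) _ from
      (Complex.contDiff_exp (𝕜 := ℝ)).comp (dotCLM ξ).contDiff⟩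

theorem cinfExp_ne_zero (ξ : Fin n → ℂ) : cinfExp ξ ≠ 0 := fun h =>
  Complex.exp_ne_zero (dotCLM ξ 0) (congrFun (congrArg Subtype.val h) 0)

/-- Mathlib's Fourier transform lives on inner product spaces, while `Cinf n` consists of
functions on the sup-normed space `Fin n → ℝ`. -/
def onEuclidean (f : Cinf n) : EuclideanSpace ℝ (Fin n) → ℂ :=
  (f : (Fin n → ℝ) → ℂ) ∘ EuclideanSpace.equiv (Fin n) ℝ

theorem contDiff_onEuclidean (f : Cinf n) : ContDiff ℝ (⊤ : ℕ∞) (onEuclidean f) :=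
  (show ContDiff ℝ (⊤ : ℕ∞) (f : (Fin n → ℝ) → ℂ) from f.2).comp
    (EuclideanSpace.equiv (Fin n) ℝ).contDiff

theorem integrable_onEuclidean {f : Cinf n} (hf : HasCompactSupport (f : (Fin n → ℝ) → ℂ)) :
    Integrable (onEuclidean f) :=
  (contDiff_onEuclidean f).continuous.integrable_of_hasCompactSupport
    (hf.comp_homeomorph (EuclideanSpace.equiv (Fin n) ℝ).toHomeomorph)

variable [Module (MvPolynomial (Fin n) ℂ) (Cinf n)]
  (hX : ∀ (i : Fin n) (f : Cinf n),
    (((MvPolynomial.X i : MvPolynomial (Fin n) ℂ) • f : Cinf n) : (Fin n → ℝ) → ℂ) =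
      fun x => fderiv ℝ (f : (Fin n → ℝ) → ℂ) x (Pi.single i 1))
  (hC : ∀ (c : ℂ) (f : Cinf n),
    ((MvPolynomial.C c : MvPolynomial (Fin n) ℂ) • f : Cinf n) = c • f)

include hX in
theorem X_smul_cinfExp (ξ : Fin n → ℂ) (i : Fin n) :
    (X i : MvPolynomial (Fin n) ℂ) • cinfExp ξ = ξ i • cinfExp ξ := by
  apply Subtype.ext
  rw [hX]
  funext x
  show fderiv ℝ (fun x => Complex.exp (dotCLM ξ x)) x (Pi.single i 1) =
    ξ i * Complex.exp (dotCLM ξ x)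
  rw [((dotCLM ξ).hasFDerivAt (x := x)).cexp.fderiv]
  simp [dotCLM_apply, Pi.single_apply, apply_ite (fun r : ℝ => (r : ℂ)), mul_comm]

include hX hC in
theorem smul_cinfExp (ξ : Fin n → ℂ) (p : MvPolynomial (Fin n) ℂ) :
    p • cinfExp ξ = eval ξ p • cinfExp ξ := by
  induction p using MvPolynomial.induction_on with
  | C a => rw [hC, eval_C]
  | add p q hp hq => rw [add_smul, hp, hq, map_add, add_smul]
  | mul_X p i hp =>
    let c : ℂ → MvPolynomial (Fin n) ℂ := C
    calc (p * X i) • cinfExp ξ = p • (c (ξ i) • cinfExp ξ) := by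
          rw [mul_smul, X_smul_cinfExp hX, hC]
      _ = c (ξ i) • c (eval ξ p) • cinfExp ξ := by
          rw [← mul_smul, mul_comm, mul_smul, hp, hC (eval ξ p)]
      _ = eval ξ (p * X i) • cinfExp ξ := by
          rw [← mul_smul, ← C_mul, hC, eval_mul, eval_X, mul_comm]

include hX hC in
theorem smul_cinfExp_mem_system {ℓ k : ℕ}
    {M : Matrix (Fin ℓ) (Fin k) (MvPolynomial (Fin n) ℂ)} {ξ : Fin n → ℂ} {v : Fin k → ℂ}
    (hv : (M.map (eval ξ)).mulVec v = 0) :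
    (fun j => v j • cinfExp ξ) ∈ system M := by
  intro i
  have hterm : ∀ j, M i j • v j • cinfExp ξ = (eval ξ (M i j) * v j) • cinfExp ξ := by
    intro j
    rw [← hC, ← mul_smul, smul_cinfExp hX hC, eval_mul, eval_C]
  have hrow : ∑ j, eval ξ (M i j) * v j = 0 := by
    simpa [Matrix.mulVec, dotProduct] using congrFun hv i
  simp only [hterm, ← Finset.sum_smul, hrow, zero_smul]

include hX hC in
theorem exists_ne_zero_mem_system {k : ℕ}
    {M : Matrix (Fin k) (Fin k) (MvPolynomial (Fin n) ℂ)} {ξ : Fin n → ℂ} (hξ : eval ξ M.det = 0) :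
    ∃ f ∈ system M, f ≠ 0 := by
  rw [RingHom.map_det] at hξ
  obtain ⟨v, hv, hMv⟩ := Matrix.exists_mulVec_eq_zero_iff.mpr hξ
  obtain ⟨j, hj⟩ := Function.ne_iff.mp hv
  exact ⟨_, smul_cinfExp_mem_system hX hC hMv,
    Function.ne_iff.mpr ⟨j, smul_ne_zero hj (cinfExp_ne_zero ξ)⟩⟩

include hX hC in
theorem hasCompactSupport_smul (p : MvPolynomial (Fin n) ℂ) {f : Cinf n}
    (hf : HasCompactSupport (f : (Fin n → ℝ) → ℂ)) :
    HasCompactSupport ((p • f : Cinf n) : (Fin n → ℝ) → ℂ) := by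
  induction p using MvPolynomial.induction_on generalizing f with
  | C a =>
    rw [hC]
    exact hf.smul_left
  | add p q hp hq =>
    rw [add_smul]
    exact (hp hf).add (hq hf)
  | mul_X p i hp =>
    rw [mul_smul]
    refine hp ?_
    rw [hX]
    exact hf.fderiv_apply ℝ _

include hX in
theorem onEuclidean_X_smul (i : Fin n) (f : Cinf n) :
    onEuclidean ((X i : MvPolynomial (Fin n) ℂ) • f) =
      fun v => fderiv ℝ (onEuclidean f) v (EuclideanSpace.single i 1) := by
  funext v
  have hf : Differentiable ℝ (f : (Fin n → ℝ) → ℂ) :=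
    (show ContDiff ℝ (⊤ : ℕ∞) (f : (Fin n → ℝ) → ℂ) from f.2).differentiable (by simp)
  simp only [onEuclidean, Function.comp_apply, hX,
    ((hf _).hasFDerivAt.comp v (EuclideanSpace.equiv (Fin n) ℝ).hasFDerivAt).fderiv]
  rfl

include hX in
theorem fourier_onEuclidean_X_smul (i : Fin n) {f : Cinf n}
    (hf : HasCompactSupport (f : (Fin n → ℝ) → ℂ)) (ξ : EuclideanSpace ℝ (Fin n)) :
    𝓕 (onEuclidean ((X i : MvPolynomial (Fin n) ℂ) • f)) ξ =
      (2 * Real.pi * Complex.I * ξ i) • 𝓕 (onEuclidean f) ξ := by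
  have hsmooth := contDiff_onEuclidean f
  have hdiff := hsmooth.differentiable (by simp)
  have hint' : Integrable (fderiv ℝ (onEuclidean f)) :=
    (hsmooth.continuous_fderiv (by simp)).integrable_of_hasCompactSupport
      ((hf.comp_homeomorph (EuclideanSpace.equiv (Fin n) ℝ).toHomeomorph).fderiv (𝕜 := ℝ))
  rw [onEuclidean_X_smul hX, ← Real.fourier_continuousLinearMap_apply hint',
    Real.fourier_fderiv (integrable_onEuclidean hf) hdiff hint',
    VectorFourier.fourierSMulRight_apply]
  have hinner : innerSL ℝ ξ (EuclideanSpace.single i (1 : ℝ)) = ξ i := by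
    simp [EuclideanSpace.inner_single_right]
  simp only [neg_apply, hinner, Complex.real_smul, smul_eq_mul]
  push_cast
  ring

include hX hC in
theorem fourier_onEuclidean_smul (p : MvPolynomial (Fin n) ℂ) {f : Cinf n}
    (hf : HasCompactSupport (f : (Fin n → ℝ) → ℂ)) (ξ : EuclideanSpace ℝ (Fin n)) :
    𝓕 (onEuclidean (p • f)) ξ =
      eval (fun i => 2 * Real.pi * Complex.I * ξ i) p • 𝓕 (onEuclidean f) ξ := by
  induction p using MvPolynomial.induction_on generalizing f with
  | C a =>
    rw [hC, eval_C]
    exact congrFun (VectorFourier.fourierIntegral_const_smul _ _ _ _ _) ξ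
  | add p q hp hq =>
    have hsum : onEuclidean ((p + q) • f) = onEuclidean (p • f) + onEuclidean (q • f) := by
      rw [add_smul]; rfl
    rw [hsum, map_add, add_smul, ← hp hf, ← hq hf]
    exact congrFun (VectorFourier.fourierIntegral_add Real.continuous_fourierChar
      continuous_inner (integrable_onEuclidean (hasCompactSupport_smul hX hC p hf))
      (integrable_onEuclidean (hasCompactSupport_smul hX hC q hf))) ξ
  | mul_X p i hp =>
    have hXf : HasCompactSupport
        (((X i : MvPolynomial (Fin n) ℂ) • f : Cinf n) : (Fin n → ℝ) → ℂ) :=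
      hasCompactSupport_smul hX hC _ hf
    rw [mul_smul, hp hXf, fourier_onEuclidean_X_smul hX i hf, smul_smul, eval_mul, eval_X]

include hX hC in
theorem eq_zero_of_smul_eq_zero_of_hasCompactSupport {p : MvPolynomial (Fin n) ℂ}
    (hp : p ≠ 0) {f : Cinf n} (hf : HasCompactSupport (f : (Fin n → ℝ) → ℂ)) (h : p • f = 0) :
    f = 0 := by
  have hint := integrable_onEuclidean hf
  have hmul : ∀ ξ,
      eval (fun i => 2 * Real.pi * Complex.I * ξ i) p * 𝓕 (onEuclidean f) ξ = 0 := by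
    intro ξ
    rw [← smul_eq_mul, ← fourier_onEuclidean_smul hX hC p hf ξ, h]
    simp [onEuclidean, Real.fourier_eq]
  have hc : 2 * (Real.pi : ℂ) * Complex.I ≠ 0 := by simp [Real.pi_ne_zero]
  have hdense : Dense {ξ : EuclideanSpace ℝ (Fin n) |
      eval (fun i => 2 * Real.pi * Complex.I * ξ i) p ≠ 0} :=
    (dense_setOf_eval_const_mul_ne_zero hp hc).preimage
      (EuclideanSpace.equiv (Fin n) ℝ).toHomeomorph.isOpenMap
  have hcont : Continuous (𝓕 (onEuclidean f)) :=
    VectorFourier.fourierIntegral_continuous Real.continuous_fourierChar continuous_inner hint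
  have hfourier : 𝓕 (onEuclidean f) = 0 :=
    hcont.ext_on hdense continuous_const fun ξ hξ => (mul_eq_zero.mp (hmul ξ)).resolve_left hξ
  have hzero : onEuclidean f = 0 := by
    rw [← (contDiff_onEuclidean f).continuous.fourierInv_fourier_eq hint
      (by rw [hfourier]; exact integrable_zero _ _ _), hfourier]
    ext ξ
    simp [Real.fourierInv_eq]
  ext x
  have hx := congrFun hzero ((EuclideanSpace.equiv (Fin n) ℝ).symm x)
  rwa [onEuclidean, Function.comp_apply, ContinuousLinearEquiv.apply_symm_apply] at hx

end DifferentialOperators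

theorem not_isControllable_of_hasCompactSupport_eq_zero {n k : ℕ} {B : Set (Fin k → Cinf n)}
    (h0 : 0 ∈ B) (hne : ∃ f ∈ B, f ≠ 0)
    (hB : ∀ f ∈ B, (∀ j, HasCompactSupport (f j : (Fin n → ℝ) → ℂ)) → f = 0) :
    ¬IsControllable B := by
  intro hctrl
  obtain ⟨f₂, hf₂, hf₂ne⟩ := hne
  obtain ⟨j, x₀, hx₀⟩ : ∃ j x, (f₂ j : (Fin n → ℝ) → ℂ) x ≠ 0 := by
    by_contra! h
    exact hf₂ne (funext fun j => Subtype.ext (funext (h j)))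
  have hsep : closure (Metric.ball x₀ 1)ᶜ ∩ closure {x₀} = ∅ := by
    rw [Metric.isOpen_ball.isClosed_compl.closure_eq, closure_singleton]
    simp
  obtain ⟨f, hf, V₁, V₂, -, -, hV₁, hV₂, hfV₁, hfV₂⟩ := hctrl _ _ hsep 0 h0 f₂ hf₂
  have hcs : ∀ j, HasCompactSupport (f j : (Fin n → ℝ) → ℂ) := fun j =>
    HasCompactSupport.intro (isCompact_closedBall x₀ 1) fun x hx =>
      hfV₁ x (hV₁ fun hxb => hx (Metric.ball_subset_closedBall hxb)) j
  have hfx₀ := hfV₂ x₀ (hV₂ rfl) j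
  rw [hB f hf hcs] at hfx₀
  exact hx₀ hfx₀.symm

/-- **Theorem 1.2**, second half (Shankar). In the overdetermined case `ℓ = k` (with `n ≥ 1`,
`d ≥ 1`), a generic system is uncontrollable: the set of matrices in `M_{k,k}(d)` defining an
uncontrollable distributed system contains a nonempty Zariski-open subset; i.e. there is a
nonzero polynomial `F` in the `N = k²·(n+d choose n)` coefficient variables such that every
`k × k` matrix of degree at most `d` whose coefficient vector does not annihilate `F` defines
an uncontrollable system. -/
theorem generic_uncontrollable (n k d : ℕ) (hn : 0 < n) (hk : 0 < k) (hd : 0 < d)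
    [Module (MvPolynomial (Fin n) ℂ) (Cinf n)]
    (hX : ∀ (i : Fin n) (f : Cinf n),
      (((MvPolynomial.X i : MvPolynomial (Fin n) ℂ) • f : Cinf n) : (Fin n → ℝ) → ℂ) =
        fun x => fderiv ℝ (f : (Fin n → ℝ) → ℂ) x (Pi.single i 1))
    (hC : ∀ (c : ℂ) (f : Cinf n),
      ((MvPolynomial.C c : MvPolynomial (Fin n) ℂ) • f : Cinf n) = c • f) :
    ∃ F : MvPolynomial (Fin k × Fin k × {m : Fin n →₀ ℕ // m.degree ≤ d}) ℂ,
      F ≠ 0 ∧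
      ∀ M : Matrix (Fin k) (Fin k) (MvPolynomial (Fin n) ℂ),
        (∀ i j, (M i j).totalDegree ≤ d) →
        MvPolynomial.eval (matrixCoeffs (d := d) M) F ≠ 0 →
        ¬ IsControllable (system M) := by
  refine ⟨genericDetCoeff n k d ⟨0, hn⟩, genericDetCoeff_ne_zero _, fun M hM hF => ?_⟩
  rw [eval_genericDetCoeff _ hM] at hF
  have hdet : ¬IsUnit M.det :=
    not_isUnit_of_coeff_ne_zero (Finsupp.single_ne_zero.mpr (Nat.mul_ne_zero hk.ne' hd.ne')) hF
  obtain ⟨ξ, hξ⟩ := exists_eval_eq_zero_of_not_isUnit hdet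
  refine not_isControllable_of_hasCompactSupport_eq_zero (fun i => by simp)
    (exists_ne_zero_mem_system hX hC hξ) fun f hf hcs => funext fun j => ?_
  have hdet0 : M.det ≠ 0 := fun h => hF (by rw [h, coeff_zero])
  exact eq_zero_of_smul_eq_zero_of_hasCompactSupport hX hC hdet0 (hcs j)
    (M.det_smul_eq_zero_of_sum_smul_eq_zero hf j)
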